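/- arXiv:2511.15460 — 3 statements merged into one kernel-verified Lean document; each statement's English description precedes it below -/
import Mathlib

section
/- Let M be a matroid on a finite ground set E with rk(E) ≥ 1, and let A₀ ⊆ E attain Φ_M. Then for every subset A₁ ⊆ E\A₀ with rk(E\A₀) − rk((E\A₀)\A₁) ≥ 1, we have |A₁| / (rk(E\A₀) − rk((E\A₀)\A₁)) ≥ Φ_M. In particular, if rk(E\A₀) ≥ 1, then the fractional packing number of the restriction M|(E\A₀) satisfies Φ_{M|(E\A₀)} ≥ Φ_M. -/
open Set Matroid

variable {α : Type*}

/-- The rank of a set `A` in a matroid `M`: the size of a largest independent subset of `A`. -/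
noncomputable def mrk (M : Matroid α) (A : Set α) : ℕ :=
  sSup {n : ℕ | ∃ I, M.Indep I ∧ I ⊆ A ∧ I.ncard = n}

/-- The total weight of a set of elements. -/
noncomputable def wSum (w : α → ℝ) (S : Set α) : ℝ := ∑ᶠ e ∈ S, w e

/-- `B` is a minimum-weight base of `M` with respect to the weights `w`. -/
def IsMinWeightBase (M : Matroid α) (w : α → ℝ) (B : Set α) : Prop :=
  M.IsBase B ∧ ∀ B', M.IsBase B' → wSum w B ≤ wSum w B'

/-- A circuit: an inclusion-wise minimal dependent set. -/
def IsCircuit (M : Matroid α) (C : Set α) : Prop :=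
  C ⊆ M.E ∧ ¬ M.Indep C ∧ ∀ x ∈ C, M.Indep (C \ {x})

/-- The fractional base packing number `Φ_M`. -/
noncomputable def PhiM (M : Matroid α) : ℝ :=
  sInf {x : ℝ | ∃ A ⊆ M.E, mrk M (M.E \ A) < mrk M M.E ∧
    x = (A.ncard : ℝ) / ((mrk M M.E : ℝ) - (mrk M (M.E \ A) : ℝ))}

/-- `A` attains the fractional packing number of `M`. -/
def AttainsPhi (M : Matroid α) (A : Set α) : Prop :=
  A ⊆ M.E ∧ mrk M (M.E \ A) < mrk M M.E ∧
    (A.ncard : ℝ) / ((mrk M M.E : ℝ) - (mrk M (M.E \ A) : ℝ)) = PhiM M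

/-- The fractional base covering number `β_M`. -/
noncomputable def BetaM (M : Matroid α) : ℝ :=
  sSup {x : ℝ | ∃ A ⊆ M.E, A.Nonempty ∧ x = (A.ncard : ℝ) / (mrk M A : ℝ)}

/-- The relative load of an element `e` in a base collection `Bs` of size `k`. -/
noncomputable def relLoad {k : ℕ} (Bs : Fin k → Set α) (e : α) : ℝ :=
  (({i | e ∈ Bs i} : Set (Fin k)).ncard : ℝ) / (k : ℝ)

/-! Removing `A₀ ∪ A₁` from `E` loses rank `(r - r₀) + (r₀ - r₁)` for at most `|A₀| + |A₁|`
elements, where `r, r₀, r₁` are the ranks of `E`, `E \ A₀`, `(E \ A₀) \ A₁`. Since `A₀` already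
realizes the minimal ratio `Φ_M = |A₀| / (r - r₀)`, minimality of the mediant
`(|A₀| + |A₁|) / (r - r₁) ≥ Φ_M` forces `|A₁| / (r₀ - r₁) ≥ Φ_M`. Every candidate set of
`M ↾ (E \ A₀)` is such an `A₁`. -/

lemma le_div_of_mediant {Φ a b r r₀ r₁ : ℝ} (h₀ : r₀ < r) (h₁ : r₁ < r₀)
    (ha : a / (r - r₀) = Φ) (hab : Φ ≤ (a + b) / (r - r₁)) : Φ ≤ b / (r₀ - r₁) := by
  have ha' : a = Φ * (r - r₀) := by
    rw [← ha, div_mul_cancel₀ a (sub_pos.mpr h₀).ne']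
  rw [le_div_iff₀ (by linarith), ha'] at hab
  rw [le_div_iff₀ (sub_pos.mpr h₁)]
  linarith

namespace Matroid

variable (M : Matroid α)

lemma mrk_empty : mrk M ∅ = 0 := by
  have h : {n : ℕ | ∃ I, M.Indep I ∧ I ⊆ (∅ : Set α) ∧ I.ncard = n} = {0} := by
    ext n
    constructor
    · rintro ⟨I, -, hI, rfl⟩
      simp [subset_empty_iff.mp hI]
    · rintro rfl
      exact ⟨∅, M.empty_indep, Subset.rfl, ncard_empty _⟩
  rw [mrk, h, csSup_singleton]

lemma mrk_restrict {X A : Set α} (h : A ⊆ X) : mrk (M ↾ X) A = mrk M A := by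
  unfold mrk
  congr 1
  ext n
  constructor
  · rintro ⟨I, hI, hIA, rfl⟩
    exact ⟨I, (restrict_indep_iff.mp hI).1, hIA, rfl⟩
  · rintro ⟨I, hI, hIA, rfl⟩
    exact ⟨I, restrict_indep_iff.mpr ⟨hI, hIA.trans h⟩, hIA, rfl⟩

lemma PhiM_le_div {A : Set α} (hA : A ⊆ M.E) (hlt : mrk M (M.E \ A) < mrk M M.E) :
    PhiM M ≤ (A.ncard : ℝ) / ((mrk M M.E : ℝ) - (mrk M (M.E \ A) : ℝ)) := by
  refine csInf_le ⟨0, ?_⟩ ⟨A, hA, hlt, rfl⟩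
  rintro x ⟨B, -, hB, rfl⟩
  have : (0 : ℝ) < (mrk M M.E : ℝ) - (mrk M (M.E \ B) : ℝ) := sub_pos.mpr (by exact_mod_cast hB)
  positivity

lemma le_PhiM_restrict {X : Set α} {c : ℝ} (hX : 1 ≤ mrk M X)
    (h : ∀ A ⊆ X, mrk M (X \ A) < mrk M X →
      c ≤ (A.ncard : ℝ) / ((mrk M X : ℝ) - (mrk M (X \ A) : ℝ))) :
    c ≤ PhiM (M ↾ X) := by
  refine le_csInf ⟨_, X, Subset.rfl, ?_, rfl⟩ ?_
  · rwa [restrict_ground_eq, sdiff_self, mrk_restrict M (empty_subset X), mrk_empty,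
      mrk_restrict M Subset.rfl]
  · rintro x ⟨A, hAX, hlt, rfl⟩
    rw [restrict_ground_eq, mrk_restrict M Subset.rfl, mrk_restrict M sdiff_subset] at hlt ⊢
    exact h A hAX hlt

variable {M}

theorem AttainsPhi.PhiM_le_div {A₀ A₁ : Set α} (hA₀ : AttainsPhi M A₀) (hA₁ : A₁ ⊆ M.E \ A₀)
    (hlt : mrk M ((M.E \ A₀) \ A₁) < mrk M (M.E \ A₀)) :
    PhiM M ≤ (A₁.ncard : ℝ) / ((mrk M (M.E \ A₀) : ℝ) - (mrk M ((M.E \ A₀) \ A₁) : ℝ)) := by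
  obtain ⟨hA₀E, hlt₀, hΦ⟩ := hA₀
  have hunion := M.PhiM_le_div (union_subset hA₀E (hA₁.trans sdiff_subset))
    (by rw [← sdiff_sdiff]; exact hlt.trans hlt₀)
  rw [← sdiff_sdiff] at hunion
  have hcard : ((A₀ ∪ A₁).ncard : ℝ) ≤ A₀.ncard + A₁.ncard := by
    exact_mod_cast ncard_union_le A₀ A₁
  refine le_div_of_mediant (by exact_mod_cast hlt₀) (by exact_mod_cast hlt) hΦ
    (hunion.trans (div_le_div_of_nonneg_right hcard ?_))
  exact sub_nonneg.mpr (by exact_mod_cast (hlt.trans hlt₀).le)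

end Matroid

theorem stmt_5_general (M : Matroid α)
    (A₀ : Set α) (hA₀ : AttainsPhi M A₀) :
    (∀ A₁ ⊆ M.E \ A₀, mrk M ((M.E \ A₀) \ A₁) < mrk M (M.E \ A₀) →
      PhiM M ≤ (A₁.ncard : ℝ) /
        ((mrk M (M.E \ A₀) : ℝ) - (mrk M ((M.E \ A₀) \ A₁) : ℝ))) ∧
    (1 ≤ mrk M (M.E \ A₀) → PhiM M ≤ PhiM (M ↾ (M.E \ A₀))) :=
  ⟨fun _ => hA₀.PhiM_le_div, fun hrk => M.le_PhiM_restrict hrk fun _ => hA₀.PhiM_le_div⟩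

/-- If `A₀` attains `Φ_M`, then every candidate set in the restriction to `E \ A₀` has
partition value at least `Φ_M`; in particular the packing number of the restriction is
at least `Φ_M`. -/
theorem stmt_5 (M : Matroid α) (hfin : M.E.Finite) (hrk : 1 ≤ mrk M M.E)
    (A₀ : Set α) (hA₀ : AttainsPhi M A₀) :
    (∀ A₁ ⊆ M.E \ A₀, mrk M ((M.E \ A₀) \ A₁) < mrk M (M.E \ A₀) →
      PhiM M ≤ (A₁.ncard : ℝ) /
        ((mrk M (M.E \ A₀) : ℝ) - (mrk M ((M.E \ A₀) \ A₁) : ℝ))) ∧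
    (1 ≤ mrk M (M.E \ A₀) → PhiM M ≤ PhiM (M ↾ (M.E \ A₀))) :=
  stmt_5_general M A₀ hA₀
end

section
/- Let M be a loopless matroid on a finite nonempty ground set E, and let ℓ* be the ideal relative loads arising from any Φ-decomposition of M. Then 1 / (min_{e∈E} ℓ*(e)) = max over all nonempty A ⊆ E of |A| / rk(A); that is, the reciprocal of the minimum ideal relative load equals the fractional covering number β_M of M. -/
open Set Matroid

variable {α : Type*}

/-!
Write `Φᵢ := Φ_{M|Eᵢ}` and `Dᵢ := Eᵢ \ Eᵢ₊₁`. Testing the minimality of `Φᵢ` against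
`Dᵢ \ S`, and using that `Dᵢ` attains it, submodularity of the rank gives
`|S ∩ Dᵢ| ≤ Φᵢ (r(S ∩ Eᵢ) - r(S ∩ Eᵢ₊₁))` for every `S`. Summing over the layers,
`|S| ≤ (maxᵢ Φᵢ) r(S)`, so `β_M ≤ maxᵢ Φᵢ`; conversely `Φᵢ ≤ |Eᵢ| / r(Eᵢ) ≤ β_M`.
Hence `β_M = maxᵢ Φᵢ`, and the minimum ideal load is `1 / maxᵢ Φᵢ`.
-/

section Rank

lemma cast_mrk_eq_eRk (M : Matroid α) [M.RankFinite] (A : Set α) :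
    (mrk M A : ℕ∞) = M.eRk A := by
  obtain ⟨I, hI⟩ := M.exists_isBasis' A
  have hgreatest : IsGreatest {n : ℕ | ∃ I, M.Indep I ∧ I ⊆ A ∧ I.ncard = n} I.ncard := by
    refine ⟨⟨I, hI.indep, hI.subset, rfl⟩, ?_⟩
    rintro _ ⟨J, hJ, hJA, rfl⟩
    have hle := hJ.encard_le_eRk_of_subset hJA
    rw [← hI.encard_eq_eRk, ← hJ.finite.cast_ncard_eq, ← hI.indep.finite.cast_ncard_eq] at hle
    exact_mod_cast hle
  rw [mrk, hgreatest.csSup_eq, hI.indep.finite.cast_ncard_eq, hI.encard_eq_eRk]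

variable {M : Matroid α} [M.RankFinite] {X Y : Set α}

lemma mrk_empty : mrk M ∅ = 0 := by
  exact_mod_cast (cast_mrk_eq_eRk M ∅).trans M.eRk_empty

lemma mrk_mono (hXY : X ⊆ Y) : mrk M X ≤ mrk M Y := by
  have h := M.eRk_mono hXY
  rwa [← cast_mrk_eq_eRk, ← cast_mrk_eq_eRk, Nat.cast_le] at h

lemma mrk_inter_add_mrk_union_le (X Y : Set α) :
    mrk M (X ∩ Y) + mrk M (X ∪ Y) ≤ mrk M X + mrk M Y := by
  have h := M.eRk_inter_add_eRk_union_le X Y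
  simp only [← cast_mrk_eq_eRk] at h
  exact_mod_cast h

lemma mrk_union_add_mrk_le_of_subset (hXY : X ⊆ Y) (T : Set α) :
    mrk M (Y ∪ T) + mrk M X ≤ mrk M Y + mrk M (X ∪ T) := by
  have h := mrk_inter_add_mrk_union_le (M := M) Y (X ∪ T)
  rw [← union_assoc, union_eq_self_of_subset_right hXY] at h
  have hX : mrk M X ≤ mrk M (Y ∩ (X ∪ T)) := mrk_mono (subset_inter hXY subset_union_left)
  omega

lemma mrk_restrict_of_subset {R : Set α} (hXR : X ⊆ R) : mrk (M ↾ R) X = mrk M X := by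
  have h := M.restrict_eRk_eq hXR
  rwa [← cast_mrk_eq_eRk, ← cast_mrk_eq_eRk, Nat.cast_inj] at h

end Rank

section Packing

variable {N : Matroid α} {A : Set α}

lemma phiM_nonneg (N : Matroid α) : 0 ≤ PhiM N := by
  refine Real.sInf_nonneg ?_
  rintro _ ⟨A, -, hlt, rfl⟩
  exact div_nonneg (Nat.cast_nonneg _) (sub_nonneg.2 (by exact_mod_cast hlt.le))

lemma phiM_le_div (hA : A ⊆ N.E) (hlt : mrk N (N.E \ A) < mrk N N.E) :
    PhiM N ≤ A.ncard / ((mrk N N.E : ℝ) - mrk N (N.E \ A)) := by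
  refine csInf_le ⟨0, ?_⟩ ⟨A, hA, hlt, rfl⟩
  rintro _ ⟨B, -, hB, rfl⟩
  exact div_nonneg (Nat.cast_nonneg _) (sub_nonneg.2 (by exact_mod_cast hB.le))

lemma phiM_mul_le (hA : A ⊆ N.E) :
    PhiM N * ((mrk N N.E : ℝ) - mrk N (N.E \ A)) ≤ A.ncard := by
  rcases lt_or_ge (mrk N (N.E \ A)) (mrk N N.E) with hlt | hge
  · have hdrop : (0 : ℝ) < (mrk N N.E : ℝ) - mrk N (N.E \ A) :=
      sub_pos.2 (by exact_mod_cast hlt)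
    rw [← le_div_iff₀ hdrop]
    exact phiM_le_div hA hlt
  · refine (mul_nonpos_of_nonneg_of_nonpos (phiM_nonneg N) ?_).trans (Nat.cast_nonneg _)
    exact sub_nonpos.2 (by exact_mod_cast hge)

lemma AttainsPhi.ncard_eq (h : AttainsPhi N A) :
    (A.ncard : ℝ) = PhiM N * ((mrk N N.E : ℝ) - mrk N (N.E \ A)) := by
  rw [← h.2.2, div_mul_cancel₀]
  exact (sub_pos.2 (by exact_mod_cast h.2.1)).ne'

lemma AttainsPhi.phiM_pos (h : AttainsPhi N A) (hA : A.Finite) : 0 < PhiM N := by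
  have hne : A.Nonempty := by
    rw [nonempty_iff_ne_empty]
    rintro rfl
    exact (h.2.1.trans_eq (by rw [sdiff_empty])).false
  rw [← h.2.2]
  exact div_pos (by exact_mod_cast (ncard_pos hA).2 hne) (sub_pos.2 (by exact_mod_cast h.2.1))

lemma AttainsPhi.ncard_inter_le [N.RankFinite] (h : AttainsPhi N A) (hA : A.Finite) (S : Set α) :
    ((S ∩ A).ncard : ℝ) ≤ PhiM N * ((mrk N (S ∩ N.E) : ℝ) - mrk N (S ∩ (N.E \ A))) := by
  set B := N.E \ A
  have hcompl : N.E \ (A \ S) = B ∪ S ∩ A := by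
    ext x
    have := @h.1 x
    simp only [B, mem_sdiff, mem_union, mem_inter_iff]
    tauto
  have hcard : ((A \ S).ncard : ℝ) = A.ncard - (S ∩ A).ncard := by
    rw [← sdiff_inter_self_eq_sdiff, cast_ncard_sdiff inter_subset_right hA]
  have hdrop := phiM_mul_le (sdiff_subset.trans h.1 : A \ S ⊆ N.E)
  rw [hcompl, hcard, h.ncard_eq] at hdrop
  have hsub := mrk_union_add_mrk_le_of_subset (M := N) (inter_subset_right (s := S) (t := B))
    (S ∩ A)
  rw [← inter_union_distrib_left, sdiff_union_of_subset h.1] at hsub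
  have hsubR :
      (mrk N (B ∪ S ∩ A) : ℝ) - mrk N B ≤ (mrk N (S ∩ N.E) : ℝ) - mrk N (S ∩ B) := by
    have : (mrk N (B ∪ S ∩ A) : ℝ) + mrk N (S ∩ B) ≤ mrk N B + mrk N (S ∩ N.E) := by
      exact_mod_cast hsub
    linarith
  calc ((S ∩ A).ncard : ℝ) ≤ PhiM N * ((mrk N (B ∪ S ∩ A) : ℝ) - mrk N B) := by linarith
    _ ≤ PhiM N * ((mrk N (S ∩ N.E) : ℝ) - mrk N (S ∩ B)) :=
      mul_le_mul_of_nonneg_left hsubR (phiM_nonneg N)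

end Packing

lemma le_betaM {M : Matroid α} (hfin : M.E.Finite) {A : Set α} (hA : A ⊆ M.E)
    (hne : A.Nonempty) :
    A.ncard / (mrk M A : ℝ) ≤ BetaM M := by
  refine le_csSup ?_ ⟨A, hA, hne, rfl⟩
  refine ((hfin.finite_subsets.image fun B ↦ (B.ncard : ℝ) / mrk M B).subset ?_).bddAbove
  rintro _ ⟨B, hB, -, rfl⟩
  exact ⟨B, hB, rfl⟩

structure IsPhiDecomposition (M : Matroid α) (k : ℕ) (Es : ℕ → Set α) : Prop where
  zero_eq : Es 0 = M.E
  eq_empty : Es k = ∅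
  succ_ssubset : ∀ i < k, Es (i + 1) ⊂ Es i
  attainsPhi : ∀ i < k, AttainsPhi (M ↾ Es i) (Es i \ Es (i + 1))

namespace IsPhiDecomposition

variable {M : Matroid α} {k : ℕ} {Es : ℕ → Set α} {i : ℕ}

lemma subset_ground (hD : IsPhiDecomposition M k Es) : ∀ {i}, i ≤ k → Es i ⊆ M.E
  | 0, _ => hD.zero_eq.subset
  | i + 1, hi => (hD.succ_ssubset i hi).subset.trans (hD.subset_ground (by omega))

lemma layer_nonempty (hD : IsPhiDecomposition M k Es) (hi : i < k) :
    (Es i \ Es (i + 1)).Nonempty :=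
  nonempty_of_ssubset (hD.succ_ssubset i hi)

lemma exists_mem_layer (hD : IsPhiDecomposition M k Es) {e : α} (he : e ∈ M.E) :
    ∃ i < k, e ∈ Es i \ Es (i + 1) := by
  classical
  have hex : ∃ j, e ∉ Es j := ⟨k, by simp [hD.eq_empty]⟩
  have hpos : Nat.find hex ≠ 0 := by
    intro h
    exact Nat.find_spec hex (by rwa [h, hD.zero_eq])
  have hle : Nat.find hex ≤ k := Nat.find_min' hex (by simp [hD.eq_empty])
  refine ⟨Nat.find hex - 1, by omega, not_not.1 (Nat.find_min hex (by omega)), ?_⟩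
  rw [Nat.sub_add_cancel (Nat.one_le_iff_ne_zero.2 hpos)]
  exact Nat.find_spec hex

lemma layer_finite [M.Finite] (hD : IsPhiDecomposition M k Es) (hi : i < k) :
    (Es i \ Es (i + 1)).Finite :=
  M.ground_finite.subset (sdiff_subset.trans (hD.subset_ground hi.le))

lemma phiM_pos [M.Finite] (hD : IsPhiDecomposition M k Es) (hi : i < k) :
    0 < PhiM (M ↾ Es i) :=
  (hD.attainsPhi i hi).phiM_pos (hD.layer_finite hi)

lemma ncard_inter_layer_le [M.Finite] (hD : IsPhiDecomposition M k Es) (hi : i < k) (S : Set α) :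
    ((S ∩ (Es i \ Es (i + 1))).ncard : ℝ) ≤
      PhiM (M ↾ Es i) * ((mrk M (S ∩ Es i) : ℝ) - mrk M (S ∩ Es (i + 1))) := by
  have hsub := (hD.succ_ssubset i hi).subset
  have h := (hD.attainsPhi i hi).ncard_inter_le (hD.layer_finite hi) S
  rwa [restrict_ground_eq, sdiff_sdiff_right_self, inter_eq_right.2 hsub,
    mrk_restrict_of_subset inter_subset_right,
    mrk_restrict_of_subset (inter_subset_right.trans hsub)] at h

lemma ncard_le_mul_mrk [M.Finite] (hD : IsPhiDecomposition M k Es) {c : ℝ}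
    (hc : ∀ i < k, PhiM (M ↾ Es i) ≤ c) {S : Set α} (hS : S ⊆ M.E) :
    (S.ncard : ℝ) ≤ c * mrk M S := by
  have hSfin : S.Finite := M.ground_finite.subset hS
  set g : ℕ → ℝ := fun j ↦ (S ∩ Es j).ncard - c * mrk M (S ∩ Es j)
  have hmono : MonotoneOn g (Iic k) := by
    refine monotoneOn_of_le_add_one ordConnected_Iic fun j _ _ hj ↦ ?_
    have hj : j < k := by simpa using hj
    have hsub := (hD.succ_ssubset j hj).subset
    have hsplit : ((S ∩ Es j).ncard : ℝ) =
        (S ∩ (Es j \ Es (j + 1))).ncard + (S ∩ Es (j + 1)).ncard := by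
      have hdisj : Disjoint (S ∩ (Es j \ Es (j + 1))) (S ∩ Es (j + 1)) :=
        disjoint_sdiff_left.mono inter_subset_right inter_subset_right
      rw [← Nat.cast_add, ← ncard_union_eq hdisj (hSfin.subset inter_subset_left)
        (hSfin.subset inter_subset_left), ← inter_union_distrib_left, sdiff_union_of_subset hsub]
    have hrk : (mrk M (S ∩ Es (j + 1)) : ℝ) ≤ mrk M (S ∩ Es j) := by
      exact_mod_cast mrk_mono (inter_subset_inter_right S hsub)
    have hlayer := hD.ncard_inter_layer_le hj S
    have hΦ := mul_le_mul_of_nonneg_right (hc j hj) (sub_nonneg.2 hrk)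
    simp only [g]
    linarith
  have h := hmono (by simp : 0 ∈ Iic k) (by simp : k ∈ Iic k) (Nat.zero_le k)
  simp only [g, hD.zero_eq, hD.eq_empty, inter_eq_left.2 hS, inter_empty, ncard_empty, mrk_empty,
    Nat.cast_zero] at h
  linarith

lemma phiM_le_betaM [M.Finite] (hD : IsPhiDecomposition M k Es) (hi : i < k) :
    PhiM (M ↾ Es i) ≤ BetaM M := by
  set N := M ↾ Es i
  have hpos : mrk N (N.E \ N.E) < mrk N N.E := by
    rw [sdiff_self, mrk_empty]
    exact (Nat.zero_le _).trans_lt (hD.attainsPhi i hi).2.1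
  refine (phiM_le_div subset_rfl hpos).trans ?_
  rw [restrict_ground_eq, sdiff_self, mrk_empty, mrk_restrict_of_subset subset_rfl, Nat.cast_zero,
    sub_zero]
  exact le_betaM M.ground_finite (hD.subset_ground hi.le)
    (nonempty_of_ssubset' (hD.succ_ssubset i hi))

lemma exists_phiM_eq_betaM [M.Finite] (hD : IsPhiDecomposition M k Es) (hne : M.E.Nonempty) :
    ∃ i < k, PhiM (M ↾ Es i) = BetaM M := by
  have hk : 0 < k := by
    refine Nat.pos_of_ne_zero fun hk ↦ hne.ne_empty ?_
    rw [← hD.zero_eq, ← hk, hD.eq_empty]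
  obtain ⟨i, hi, hmax⟩ := (Finset.range k).exists_max_image (fun i ↦ PhiM (M ↾ Es i))
    ⟨0, Finset.mem_range.2 hk⟩
  rw [Finset.mem_range] at hi
  refine ⟨i, hi, le_antisymm (hD.phiM_le_betaM hi) ?_⟩
  refine csSup_le ⟨_, M.E, subset_rfl, hne, rfl⟩ fun _ ⟨A, hA, _, hx⟩ ↦ hx ▸ ?_
  refine div_le_of_le_mul₀ (Nat.cast_nonneg _) (hD.phiM_pos hi).le ?_
  exact hD.ncard_le_mul_mrk (fun j hj ↦ hmax j (Finset.mem_range.2 hj)) hA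

end IsPhiDecomposition

theorem stmt_8_general (M : Matroid α) (hfin : M.E.Finite) (hne : M.E.Nonempty)
    (k : ℕ) (Es : ℕ → Set α) (h0 : Es 0 = M.E) (hk : Es k = ∅)
    (hss : ∀ i < k, Es (i + 1) ⊂ Es i)
    (hatt : ∀ i < k, AttainsPhi (M ↾ Es i) (Es i \ Es (i + 1)))
    (lstar : α → ℝ)
    (hl : ∀ i < k, ∀ e ∈ Es i \ Es (i + 1), lstar e = 1 / PhiM (M ↾ Es i)) :
    1 / sInf (lstar '' M.E) = BetaM M := by
  have : M.Finite := ⟨hfin⟩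
  have hD : IsPhiDecomposition M k Es := ⟨h0, hk, hss, hatt⟩
  obtain ⟨i₀, hi₀, hβ⟩ := hD.exists_phiM_eq_betaM hne
  have hleast : IsLeast (lstar '' M.E) (1 / BetaM M) := by
    constructor
    · obtain ⟨e, he⟩ := hD.layer_nonempty hi₀
      exact ⟨e, hD.subset_ground hi₀.le he.1, by rw [hl i₀ hi₀ e he, hβ]⟩
    · rintro _ ⟨e, he, rfl⟩
      obtain ⟨i, hi, hei⟩ := hD.exists_mem_layer he
      rw [hl i hi e hei]
      exact one_div_le_one_div_of_le (hD.phiM_pos hi) (hD.phiM_le_betaM hi)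
  rw [hleast.csInf_eq, one_div_one_div]

/-- The reciprocal of the minimum ideal relative load (arising from any Φ-decomposition)
equals the fractional covering number `β_M`. -/
theorem stmt_8 (M : Matroid α) (hfin : M.E.Finite) (hne : M.E.Nonempty)
    (hloopless : ∀ e ∈ M.E, M.Indep {e})
    (k : ℕ) (Es : ℕ → Set α) (h0 : Es 0 = M.E) (hk : Es k = ∅)
    (hss : ∀ i < k, Es (i + 1) ⊂ Es i)
    (hatt : ∀ i < k, AttainsPhi (M ↾ Es i) (Es i \ Es (i + 1)))
    (lstar : α → ℝ)
    (hl : ∀ i < k, ∀ e ∈ Es i \ Es (i + 1), lstar e = 1 / PhiM (M ↾ Es i)) :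
    1 / sInf (lstar '' M.E) = BetaM M :=
  stmt_8_general M hfin hne k Es h0 hk hss hatt lstar hl
end

section
/- Let M be a matroid on a finite ground set E, let w : E → ℝ be a weight function, let B be a minimum-weight base of M with respect to w, and let A ⊆ E. Then there exists a minimum-weight base B_A of the contraction M·A (with respect to w restricted to A) such that B_A ⊆ B ∩ A. -/
open Set Matroid

variable {α : Type*}

/-- Independence in the contraction `M·A`: `X ⊆ A` is independent iff `X ∪ B₀` is
independent in `M` for some base `B₀` of the restriction `M|(E \ A)`. -/
def ConIndep (M : Matroid α) (A X : Set α) : Prop :=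
  X ⊆ A ∧ ∃ B₀, (M ↾ (M.E \ A)).IsBase B₀ ∧ M.Indep (X ∪ B₀)

/-- A base of the contraction `M·A`: a maximal `ConIndep` set. -/
def ConBase (M : Matroid α) (A B : Set α) : Prop :=
  Maximal (ConIndep M A) B


/-!
Contracting `M.E \ A` turns `ConBase M A` into the bases of `M ／ (M.E \ A)`. Fix a basis `J` of
`M.E \ A` containing `B \ A`; for every base `D` of the contraction, `D ∪ J` is a base of `M`.
Among the minimum-weight bases of the contraction take one, `D`, with fewest elements outside `B`.
If `e ∈ D \ B`, strong basis exchange between `D ∪ J` and `B` gives `f ∈ B \ (D ∪ J)`, hence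
`f ∈ A`, such that both `D - e + f` and `B - f + e` are bases. Minimality of `B` forces
`w f ≤ w e`, so `D - e + f` is again of minimum weight, with fewer elements outside `B`.
-/

namespace Matroid

variable {M : Matroid α} {B₁ B₂ C D J : Set α} {e : α}

lemma IsBase.strong_exchange (hB₁ : M.IsBase B₁) (hB₂ : M.IsBase B₂) (he : e ∈ B₁ \ B₂) :
    ∃ f ∈ B₂ \ B₁, M.IsBase (insert f (B₁ \ {e})) ∧ M.IsBase (insert e (B₂ \ {f})) := by
  have heE : e ∈ M.E := hB₁.subset_ground he.1
  have hC := hB₂.fundCircuit_isCircuit heE he.2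
  have hK := fundCocircuit_isCocircuit he.1 hB₁
  -- a circuit and a cocircuit never meet in exactly one element
  obtain ⟨f, ⟨hfC, hfK⟩, hfe⟩ : ∃ f ∈ M.fundCircuit e B₂ ∩ M.fundCocircuit e B₁, f ≠ e := by
    by_contra! h
    exact hC.inter_isCocircuit_ne_singleton hK (e := e) <| eq_singleton_iff_unique_mem.2
      ⟨⟨mem_fundCircuit .., mem_fundCocircuit ..⟩, h⟩
  have hfB₂ : f ∈ B₂ := (M.fundCircuit_subset_insert e B₂ hfC).resolve_left hfe
  have hfB₁ : f ∉ B₁ := ((M.fundCocircuit_subset_insert_compl e B₁ hfK).resolve_left hfe).2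
  have hfcl : f ∈ M.closure B₁ := by rw [hB₁.closure_eq]; exact hB₂.subset_ground hfB₂
  rw [hB₁.mem_fundCocircuit_iff_mem_fundCircuit, hB₁.indep.mem_fundCircuit_iff hfcl hfB₁] at hfK
  rw [hB₂.indep.mem_fundCircuit_iff (by rwa [hB₂.closure_eq]) he.2] at hfC
  refine ⟨f, ⟨hfB₂, hfB₁⟩, hB₁.exchange_isBase_of_indep hfB₁ ?_,
    hB₂.exchange_isBase_of_indep he.2 ?_⟩
  · rwa [insert_sdiff_singleton_comm hfe]
  · rwa [insert_sdiff_singleton_comm hfe.symm]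

lemma contract_ground_sdiff_subset (M : Matroid α) (A : Set α) : (M ／ (M.E \ A)).E ⊆ A := by
  rw [contract_ground, sdiff_sdiff_right_self]
  exact inter_subset_right

lemma IsBasis'.union_isBase_of_contract_isBase (hJ : M.IsBasis' J C) (hD : (M ／ C).IsBase D) :
    M.IsBase (D ∪ J) := by
  obtain ⟨hDJ, hCD⟩ := hJ.contract_indep_iff.1 hD.indep
  obtain ⟨B, hB, hDJB⟩ := hDJ.exists_isBase_superset
  have hBC : B ∩ C = J := hJ.inter_eq_of_subset_indep (subset_union_right.trans hDJB) hB.indep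
  have hBC_indep : (M ／ C).Indep (B \ C) := hJ.contract_indep_sdiff_iff.2 <|
    hB.indep.subset (union_subset sdiff_subset (hBC ▸ inter_subset_left))
  have hBD : D = B \ C :=
    hD.eq_of_subset_indep hBC_indep (subset_sdiff.2 ⟨subset_union_left.trans hDJB, hCD.symm⟩)
  rwa [hBD, ← hBC, sdiff_union_inter]

end Matroid

section MinWeightBase

variable {M : Matroid α} {B C D J S : Set α} {e f : α} {w : α → ℝ}

lemma wSum_insert_sdiff_singleton (hS : S.Finite) (he : e ∈ S) (hf : f ∉ S) :
    wSum w (insert f (S \ {e})) = wSum w S - w e + w f := by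
  have hf' := finsum_mem_insert w (fun h => hf h.1 : f ∉ S \ {e}) hS.sdiff
  have he' := finsum_mem_insert w (fun h => h.2 rfl : e ∉ S \ {e}) hS.sdiff
  rw [insert_sdiff_self_of_mem he] at he'
  rw [wSum, wSum, hf', he']
  ring

lemma exists_isMinWeightBase [M.Finite] (w : α → ℝ) : ∃ B, IsMinWeightBase M w B :=
  exists_min_image {B | M.IsBase B} (wSum w)
    (M.ground_finite.finite_subsets.subset fun _ hB => hB.subset_ground) M.exists_isBase

lemma IsMinWeightBase.le_of_exchange [M.Finite] (hB : IsMinWeightBase M w B) (hf : f ∈ B)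
    (he : e ∉ B) (hB' : M.IsBase (insert e (B \ {f}))) : w f ≤ w e := by
  have hle := hB.2 _ hB'
  rw [wSum_insert_sdiff_singleton hB.1.finite hf he] at hle
  linarith

lemma IsMinWeightBase.exists_contract_exchange [M.Finite] (hB : IsMinWeightBase M w B)
    (hJ : M.IsBasis' J C) (hBJ : B ∩ C ⊆ J) (hD : (M ／ C).IsBase D) (he : e ∈ D \ B) :
    ∃ f ∈ B \ D, (M ／ C).IsBase (insert f (D \ {e})) ∧ w f ≤ w e := by
  have hCD : Disjoint C D := (hJ.contract_indep_iff.1 hD.indep).2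
  have heJ : e ∉ J := fun h => hCD.notMem_of_mem_left (hJ.subset h) he.1
  obtain ⟨f, ⟨hfB, hfDJ⟩, hDJ', hB'⟩ :=
    (hJ.union_isBase_of_contract_isBase hD).strong_exchange hB.1 ⟨.inl he.1, he.2⟩
  have hfD : f ∉ D := fun h => hfDJ (.inl h)
  have hfC : f ∉ C := fun h => hfDJ (.inr (hBJ ⟨hfB, h⟩))
  refine ⟨f, ⟨hfB, hfD⟩, hD.exchange_isBase_of_indep hfD ?_, hB.le_of_exchange hfB he.2 hB'⟩
  rw [hJ.contract_indep_iff, disjoint_insert_right]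
  refine ⟨?_, hfC, hCD.mono_right sdiff_subset⟩
  rw [union_sdiff_distrib, sdiff_singleton_eq_self heJ, ← insert_union] at hDJ'
  exact hDJ'.indep

theorem IsMinWeightBase.exists_contract_subset [M.Finite] (hB : IsMinWeightBase M w B)
    (C : Set α) : ∃ D, IsMinWeightBase (M ／ C) w D ∧ D ⊆ B := by
  obtain ⟨J, hJ, hBJ⟩ := (hB.1.indep.inter_right C).subset_isBasis'_of_subset inter_subset_right
  have hfin : {D | IsMinWeightBase (M ／ C) w D}.Finite :=
    (M ／ C).ground_finite.finite_subsets.subset fun _ hD => hD.1.subset_ground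
  obtain ⟨D, hD, hmin⟩ :=
    exists_min_image _ (fun D => (D \ B).ncard) hfin (exists_isMinWeightBase w)
  refine ⟨D, hD, fun e heD => by_contra fun heB => ?_⟩
  obtain ⟨f, ⟨hfB, hfD⟩, hD', hfe⟩ := hB.exists_contract_exchange hJ hBJ hD.1 ⟨heD, heB⟩
  have hD'min : IsMinWeightBase (M ／ C) w (insert f (D \ {e})) := by
    refine ⟨hD', fun B' hB' => ?_⟩
    rw [wSum_insert_sdiff_singleton hD.1.finite heD hfD]
    linarith [hD.2 B' hB']
  have hD'B : insert f (D \ {e}) \ B = (D \ B) \ {e} := by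
    rw [insert_sdiff_of_mem _ hfB, sdiff_right_comm]
  have hle := hmin _ hD'min
  rw [hD'B] at hle
  exact hle.not_gt (ncard_sdiff_singleton_lt_of_mem ⟨heD, heB⟩ hD.1.finite.sdiff)

end MinWeightBase

lemma conIndep_eq_contract_indep (M : Matroid α) (A : Set α) :
    ConIndep M A = (M ／ (M.E \ A)).Indep := by
  ext X
  constructor
  · rintro ⟨hXA, B₀, hB₀, hX⟩
    exact (isBase_restrict_iff'.1 hB₀).contract_indep_iff.2
      ⟨hX, disjoint_sdiff_left.mono_right hXA⟩
  · intro hX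
    obtain ⟨B₀, hB₀⟩ := M.exists_isBasis' (M.E \ A)
    exact ⟨hX.subset_ground.trans (M.contract_ground_sdiff_subset A), B₀,
      isBase_restrict_iff'.2 hB₀, (hB₀.contract_indep_iff.1 hX).1⟩

lemma conBase_iff_contract_isBase {M : Matroid α} {A D : Set α} :
    ConBase M A D ↔ (M ／ (M.E \ A)).IsBase D := by
  rw [ConBase, conIndep_eq_contract_indep, isBase_iff_maximal_indep]

theorem stmt_15_general (M : Matroid α) (hfin : M.E.Finite) (w : α → ℝ)
    (B : Set α) (hB : IsMinWeightBase M w B) (A : Set α) :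
    ∃ BA, ConBase M A BA ∧ (∀ B', ConBase M A B' → wSum w BA ≤ wSum w B') ∧
      BA ⊆ B ∩ A := by
  have : M.Finite := ⟨hfin⟩
  obtain ⟨D, hD, hDB⟩ := hB.exists_contract_subset (M.E \ A)
  refine ⟨D, conBase_iff_contract_isBase.2 hD.1,
    fun B' hB' => hD.2 B' (conBase_iff_contract_isBase.1 hB'),
    subset_inter hDB (hD.1.subset_ground.trans (M.contract_ground_sdiff_subset A))⟩

/-- For any minimum-weight base `B` of `M` and any `A ⊆ E` there is a minimum-weight base
`B_A` of the contraction `M·A` contained in `B ∩ A`. -/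
theorem stmt_15 (M : Matroid α) (hfin : M.E.Finite) (w : α → ℝ)
    (B : Set α) (hB : IsMinWeightBase M w B) (A : Set α) (hA : A ⊆ M.E) :
    ∃ BA, ConBase M A BA ∧ (∀ B', ConBase M A B' → wSum w BA ≤ wSum w B') ∧
      BA ⊆ B ∩ A :=
  stmt_15_general M hfin w B hB A
end
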